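/- Let U be a 4×4 complex matrix written in 2×2 blocks as U = fromBlocks U₁₁ U₁₂ U₂₁ U₂₂. Fix k, m, n with n ≥ 1 and m + n ≤ k, write A^{(j)} := I_{2^{j−1}} ⊗ A, and define U_{(k;m,m+n)} := I_{2^{m−1}} ⊗ fromBlocks U₁₁^{(n)} U₁₂^{(n)} U₂₁^{(n)} U₂₂^{(n)} ⊗ I_{2^{k−m−n}}, and Λ_U^{(n+1)} := fromBlocks (I_{2^{n−1}} ⊗ (U₂₁† P₁ U₂₁)) (I_{2^{n−1}} ⊗ (U₂₁† P₁ U₂₂)) (I_{2^{n−1}} ⊗ (U₂₂† P₁ U₂₁)) (I_{2^{n−1}} ⊗ (U₂₂† P₁ U₂₂)). Then for every 2^k × 2^k complex matrix ρ, Tr[(P₁^{(m)} ⊗ P₁^{(n)} ⊗ I_{2^{k−m−n}}) · U_{(k;m,m+n)} · ρ · U_{(k;m,m+n)}†] = Tr[(I_{2^{m−1}} ⊗ Λ_U^{(n+1)} ⊗ I_{2^{k−m−n}}) · ρ]. -/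

import Mathlib

open Matrix Kronecker

noncomputable def P1 : Matrix (Fin 2) (Fin 2) ℂ := Matrix.single 1 1 1

/-- The canonical identification of a qubit index `q : Fin 2` together with remaining
indices `x : α` with an element of `α ⊕ α` (block splitting along the qubit `q`). -/
def qSplit {α : Type*} (q : Fin 2) (x : α) : α ⊕ α :=
  if q = 0 then Sum.inl x else Sum.inr x

/-- The common index set for a `k`-qubit register split as
(qubits `1..m-1`) × (qubit `m`) × (qubits `m+1..m+n-1`) × (qubit `m+n`) ×
(qubits `m+n+1..k`). -/
@[reducible] def Tix (A B C : Type*) := A × Fin 2 × B × Fin 2 × C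

/-- Identification of `Tix` with the index set of `P₁⁽ᵐ⁾ ⊗ P₁⁽ⁿ⁾ ⊗ I_{2^{k-m-n}}`. -/
def fP {A B C : Type*} : Tix A B C → ((A × Fin 2) × (B × Fin 2)) × C :=
  fun ⟨pa, q1, pc, q2, pb⟩ => (((pa, q1), (pc, q2)), pb)

/-- Identification of `Tix` with the index set of
`U_{(k;m,m+n)} = I_{2^{m-1}} ⊗ fromBlocks (I_{2^{n-1}} ⊗ Uᵢⱼ) ⊗ I_{2^{k-m-n}}`. -/
def gU {A B C : Type*} : Tix A B C → (A × ((B × Fin 2) ⊕ (B × Fin 2))) × C :=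
  fun ⟨pa, q1, pc, q2, pb⟩ => ((pa, qSplit q1 (pc, q2)), pb)

/-- `U_{(k;m,m+n)} := I_{2^{m-1}} ⊗ fromBlocks U₁₁⁽ⁿ⁾ U₁₂⁽ⁿ⁾ U₂₁⁽ⁿ⁾ U₂₂⁽ⁿ⁾ ⊗ I_{2^{k-m-n}}`,
with `A⁽ⁿ⁾ = I_{2^{n-1}} ⊗ A`, viewed on the common index set `Tix`. -/
noncomputable def Ukmn (k m n : ℕ) (U11 U12 U21 U22 : Matrix (Fin 2) (Fin 2) ℂ) :
    Matrix (Tix (Fin (2 ^ (m - 1))) (Fin (2 ^ (n - 1))) (Fin (2 ^ (k - m - n))))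
      (Tix (Fin (2 ^ (m - 1))) (Fin (2 ^ (n - 1))) (Fin (2 ^ (k - m - n)))) ℂ :=
  ((1 : Matrix (Fin (2 ^ (m - 1))) (Fin (2 ^ (m - 1))) ℂ) ⊗ₖ
      Matrix.fromBlocks
        ((1 : Matrix (Fin (2 ^ (n - 1))) (Fin (2 ^ (n - 1))) ℂ) ⊗ₖ U11)
        ((1 : Matrix (Fin (2 ^ (n - 1))) (Fin (2 ^ (n - 1))) ℂ) ⊗ₖ U12)
        ((1 : Matrix (Fin (2 ^ (n - 1))) (Fin (2 ^ (n - 1))) ℂ) ⊗ₖ U21)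
        ((1 : Matrix (Fin (2 ^ (n - 1))) (Fin (2 ^ (n - 1))) ℂ) ⊗ₖ U22) ⊗ₖ
      (1 : Matrix (Fin (2 ^ (k - m - n))) (Fin (2 ^ (k - m - n))) ℂ)).submatrix gU gU


/-!
By cyclicity of the trace, the left side is `Tr[(U† P U) ρ]`. Split the register along qubit `m`
(the reindexing `gU`): there `P₁⁽ᵐ⁾ ⊗ P₁⁽ⁿ⁾ ⊗ I` becomes `I ⊗ fromBlocks 0 0 0 P₁⁽ⁿ⁾ ⊗ I`, and
sandwiching `fromBlocks 0 0 0 Q` between a block matrix and its adjoint keeps only the lower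
blocks, giving the blocks `Uᵢ₂† P₁ Uⱼ₂` of `Λ_U⁽ⁿ⁺¹⁾`.
-/

namespace Matrix

variable {R : Type*}

theorem trace_mul_mul_mul_conjTranspose {m n : Type*} [Fintype m] [Fintype n] [CommSemiring R]
    [StarRing R] (P : Matrix m m R) (U : Matrix m n R) (ρ : Matrix n n R) :
    trace (P * U * ρ * Uᴴ) = trace (Uᴴ * P * U * ρ) := by
  rw [trace_mul_comm, ← Matrix.mul_assoc, ← Matrix.mul_assoc]

theorem conjTranspose_submatrix_mul_submatrix_mul_submatrix {m n : Type*} [Fintype m] [Fintype n]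
    [NonUnitalSemiring R] [StarRing R] (P : Matrix m m R) (U : Matrix m m R) (e : n ≃ m) :
    (U.submatrix e e)ᴴ * P.submatrix e e * U.submatrix e e = (Uᴴ * P * U).submatrix e e := by
  rw [conjTranspose_submatrix, submatrix_mul_equiv, submatrix_mul_equiv]

theorem fromBlocks_conjTranspose_mul_fromBlocks_zero_mul {l m n : Type*} [Fintype l] [Fintype m]
    [Fintype n] [NonUnitalSemiring R] [StarRing R] (A : Matrix n l R) (B : Matrix n m R)
    (C : Matrix n l R) (D : Matrix n m R) (Q : Matrix n n R) :
    (fromBlocks A B C D)ᴴ * (fromBlocks 0 0 0 Q : Matrix (n ⊕ n) (n ⊕ n) R) * fromBlocks A B C D =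
      fromBlocks (Cᴴ * Q * C) (Cᴴ * Q * D) (Dᴴ * Q * C) (Dᴴ * Q * D) := by
  simp [fromBlocks_conjTranspose, fromBlocks_multiply, Matrix.mul_assoc]

end Matrix

def gUEquiv {A B C : Type*} : Tix A B C ≃ (A × ((B × Fin 2) ⊕ (B × Fin 2))) × C where
  toFun := gU
  invFun
    | ((a, Sum.inl (b, q)), c) => (a, 0, b, q, c)
    | ((a, Sum.inr (b, q)), c) => (a, 1, b, q, c)
  left_inv := by
    rintro ⟨a, q₁, b, q₂, c⟩
    fin_cases q₁ <;> simp [gU, qSplit]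
  right_inv := by
    rintro ⟨⟨a, ⟨b, q⟩ | ⟨b, q⟩⟩, c⟩ <;> simp [gU, qSplit]

@[simp] theorem coe_gUEquiv {A B C : Type*} : ⇑(gUEquiv : Tix A B C ≃ _) = gU := rfl

/-- Projecting qubit `m` onto `|1⟩` is the lower-right block in the splitting along that qubit. -/
theorem kronecker_P1_kronecker_submatrix_fP {A B C : Type*}
    (Y : Matrix A A ℂ) (X : Matrix (B × Fin 2) (B × Fin 2) ℂ) (Z : Matrix C C ℂ) :
    ((Y ⊗ₖ P1) ⊗ₖ X ⊗ₖ Z).submatrix fP fP =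
      (Y ⊗ₖ fromBlocks 0 0 0 X ⊗ₖ Z).submatrix gU gU := by
  ext ⟨a, q₁, b, q₂, c⟩ ⟨a', q₁', b', q₂', c'⟩
  fin_cases q₁ <;> fin_cases q₁' <;> simp [fP, gU, qSplit, P1, Matrix.single]

theorem prob_binaryGate_general (k m n : ℕ)
    (U11 U12 U21 U22 : Matrix (Fin 2) (Fin 2) ℂ)
    (ρ : Matrix (Tix (Fin (2 ^ (m - 1))) (Fin (2 ^ (n - 1))) (Fin (2 ^ (k - m - n))))
      (Tix (Fin (2 ^ (m - 1))) (Fin (2 ^ (n - 1))) (Fin (2 ^ (k - m - n)))) ℂ) :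
    Matrix.trace
        (((((1 : Matrix (Fin (2 ^ (m - 1))) (Fin (2 ^ (m - 1))) ℂ) ⊗ₖ P1) ⊗ₖ
              ((1 : Matrix (Fin (2 ^ (n - 1))) (Fin (2 ^ (n - 1))) ℂ) ⊗ₖ P1) ⊗ₖ
              (1 : Matrix (Fin (2 ^ (k - m - n))) (Fin (2 ^ (k - m - n))) ℂ)).submatrix fP fP) *
          Ukmn k m n U11 U12 U21 U22 * ρ * (Ukmn k m n U11 U12 U21 U22)ᴴ) =
      Matrix.trace
        ((((1 : Matrix (Fin (2 ^ (m - 1))) (Fin (2 ^ (m - 1))) ℂ) ⊗ₖ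
            Matrix.fromBlocks
              ((1 : Matrix (Fin (2 ^ (n - 1))) (Fin (2 ^ (n - 1))) ℂ) ⊗ₖ (U21ᴴ * P1 * U21))
              ((1 : Matrix (Fin (2 ^ (n - 1))) (Fin (2 ^ (n - 1))) ℂ) ⊗ₖ (U21ᴴ * P1 * U22))
              ((1 : Matrix (Fin (2 ^ (n - 1))) (Fin (2 ^ (n - 1))) ℂ) ⊗ₖ (U22ᴴ * P1 * U21))
              ((1 : Matrix (Fin (2 ^ (n - 1))) (Fin (2 ^ (n - 1))) ℂ) ⊗ₖ (U22ᴴ * P1 * U22)) ⊗ₖ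
            (1 : Matrix (Fin (2 ^ (k - m - n))) (Fin (2 ^ (k - m - n))) ℂ)).submatrix gU gU) *
          ρ) := by
  rw [kronecker_P1_kronecker_submatrix_fP, trace_mul_mul_mul_conjTranspose, Ukmn, ← coe_gUEquiv,
    conjTranspose_submatrix_mul_submatrix_mul_submatrix]
  simp only [conjTranspose_kronecker, conjTranspose_one, ← mul_kronecker_mul, Matrix.mul_one,
    fromBlocks_conjTranspose_mul_fromBlocks_zero_mul]

/-- The probability computation of the multi-target quantum computational logic:
`Tr[(P₁⁽ᵐ⁾ ⊗ P₁⁽ⁿ⁾ ⊗ I) · U_{(k;m,m+n)} · ρ · U_{(k;m,m+n)}ᴴ] = Tr[(I ⊗ Λ_U⁽ⁿ⁺¹⁾ ⊗ I) · ρ]`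
for every `2^k × 2^k` matrix `ρ`. -/
theorem prob_binaryGate (k m n : ℕ) (hm : 1 ≤ m) (hn : 1 ≤ n) (hk : m + n ≤ k)
    (U11 U12 U21 U22 : Matrix (Fin 2) (Fin 2) ℂ)
    (ρ : Matrix (Tix (Fin (2 ^ (m - 1))) (Fin (2 ^ (n - 1))) (Fin (2 ^ (k - m - n))))
      (Tix (Fin (2 ^ (m - 1))) (Fin (2 ^ (n - 1))) (Fin (2 ^ (k - m - n)))) ℂ) :
    Matrix.trace
        (((((1 : Matrix (Fin (2 ^ (m - 1))) (Fin (2 ^ (m - 1))) ℂ) ⊗ₖ P1) ⊗ₖ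
              ((1 : Matrix (Fin (2 ^ (n - 1))) (Fin (2 ^ (n - 1))) ℂ) ⊗ₖ P1) ⊗ₖ
              (1 : Matrix (Fin (2 ^ (k - m - n))) (Fin (2 ^ (k - m - n))) ℂ)).submatrix fP fP) *
          Ukmn k m n U11 U12 U21 U22 * ρ * (Ukmn k m n U11 U12 U21 U22)ᴴ) =
      Matrix.trace
        ((((1 : Matrix (Fin (2 ^ (m - 1))) (Fin (2 ^ (m - 1))) ℂ) ⊗ₖ
            Matrix.fromBlocks
              ((1 : Matrix (Fin (2 ^ (n - 1))) (Fin (2 ^ (n - 1))) ℂ) ⊗ₖ (U21ᴴ * P1 * U21))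
              ((1 : Matrix (Fin (2 ^ (n - 1))) (Fin (2 ^ (n - 1))) ℂ) ⊗ₖ (U21ᴴ * P1 * U22))
              ((1 : Matrix (Fin (2 ^ (n - 1))) (Fin (2 ^ (n - 1))) ℂ) ⊗ₖ (U22ᴴ * P1 * U21))
              ((1 : Matrix (Fin (2 ^ (n - 1))) (Fin (2 ^ (n - 1))) ℂ) ⊗ₖ (U22ᴴ * P1 * U22)) ⊗ₖ
            (1 : Matrix (Fin (2 ^ (k - m - n))) (Fin (2 ^ (k - m - n))) ℂ)).submatrix gU gU) *
          ρ) :=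
  prob_binaryGate_general k m n U11 U12 U21 U22 ρ
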